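/- (1) The unital associative ℤ[a,b,c]-algebra presented by generators s₁, s₂ and relations s₁s₂s₁ = s₂s₁s₂ and sᵢ³ = a·sᵢ² + b·sᵢ + c for i ∈ {1,2} is not finitely generated as a ℤ[a,b,c]-module. (2) In the specialization a = b = 0, i.e. in the unital associative ℤ[c]-algebra A₀ presented by generators s₁, s₂ and relations s₁s₂s₁ = s₂s₁s₂, s₁³ = c, s₂³ = c, the element (s₁²s₂²)⁶ − c⁸ is a nonzero torsion element: c·((s₁²s₂²)⁶ − c⁸) = 0 in A₀ but (s₁²s₂²)⁶ − c⁸ ≠ 0 in A₀. -/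

import Mathlib

noncomputable section

open MvPolynomial Polynomial

/-- The polynomial ring ℤ[a,b,c], with a = X 0, b = X 1, c = X 2. -/
abbrev P3 : Type := MvPolynomial (Fin 3) ℤ

/-- The relations s₁s₂s₁ = s₂s₁s₂ and sᵢ³ = a·sᵢ² + b·sᵢ + c over ℤ[a,b,c]
(s₁ = ι 0, s₂ = ι 1). -/
inductive Rel16a : FreeAlgebra P3 (Fin 2) → FreeAlgebra P3 (Fin 2) → Prop
  | braid : Rel16a (FreeAlgebra.ι P3 0 * FreeAlgebra.ι P3 1 * FreeAlgebra.ι P3 0)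
      (FreeAlgebra.ι P3 1 * FreeAlgebra.ι P3 0 * FreeAlgebra.ι P3 1)
  | cube1 : Rel16a (FreeAlgebra.ι P3 0 ^ 3)
      (algebraMap P3 _ (X 0) * FreeAlgebra.ι P3 0 ^ 2
        + algebraMap P3 _ (X 1) * FreeAlgebra.ι P3 0 + algebraMap P3 _ (X 2))
  | cube2 : Rel16a (FreeAlgebra.ι P3 1 ^ 3)
      (algebraMap P3 _ (X 0) * FreeAlgebra.ι P3 1 ^ 2
        + algebraMap P3 _ (X 1) * FreeAlgebra.ι P3 1 + algebraMap P3 _ (X 2))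

/-- The specialization a = b = 0: relations s₁s₂s₁ = s₂s₁s₂, s₁³ = c, s₂³ = c over ℤ[c]. -/
inductive Rel16b : FreeAlgebra ℤ[X] (Fin 2) → FreeAlgebra ℤ[X] (Fin 2) → Prop
  | braid : Rel16b (FreeAlgebra.ι ℤ[X] 0 * FreeAlgebra.ι ℤ[X] 1 * FreeAlgebra.ι ℤ[X] 0)
      (FreeAlgebra.ι ℤ[X] 1 * FreeAlgebra.ι ℤ[X] 0 * FreeAlgebra.ι ℤ[X] 1)
  | cube1 : Rel16b (FreeAlgebra.ι ℤ[X] 0 ^ 3) (algebraMap ℤ[X] _ Polynomial.X)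
  | cube2 : Rel16b (FreeAlgebra.ι ℤ[X] 1 ^ 3) (algebraMap ℤ[X] _ Polynomial.X)

/-- The image of s₁ in A₀. -/
def A0s1 : RingQuot Rel16b := RingQuot.mkAlgHom ℤ[X] Rel16b (FreeAlgebra.ι ℤ[X] 0)
/-- The image of s₂ in A₀. -/
def A0s2 : RingQuot Rel16b := RingQuot.mkAlgHom ℤ[X] Rel16b (FreeAlgebra.ι ℤ[X] 1)
/-- The image of c in A₀. -/
def A0c : RingQuot Rel16b := algebraMap ℤ[X] (RingQuot Rel16b) Polynomial.X

/-!
Non-finiteness: over `ℤ[y]`, let `s₂` and `s₁` act on `ℤ[y]⁴` along the oriented cycle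
`0 → 1 → 2 → 3 → 0`, `s₂` on the first two arrows and `s₁` on the last two, the arrow into `0`
weighted by `y`. Every cube and every braid word `sᵢsⱼsᵢ` is then `0`, so with `a, b, c ↦ 0` this is
a representation of the generic algebra; `s₁²s₂²` runs once round the cycle, hence the
`(0,0)` entry of `(s₁²s₂²)ⁿ` is `yⁿ`. Since `ℤ[a,b,c]` acts on `ℤ[y]` through `ℤ`, the image of
a finitely generated `ℤ[a,b,c]`-module has bounded degree, whereas these entries do not.
The same representation with `y = 1` shows `(s₁²s₂²)⁶ - c⁸ ≠ 0` in `A₀`.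

Torsion: with `s = s₁`, `t = s₂`, `x = s²t²` and `u = ts` we have `ux = xu = c²`, and the braid
relation gives `c x³ = c³ u³`, so `c x⁶ = c³ (ux)³ = c⁹`.
-/

theorem Polynomial.not_finite_of_forall_X_pow_mem_range {R S M : Type*} [CommSemiring R]
    [CommSemiring S] [Nontrivial S] [Algebra R S] [AddCommMonoid M] [Module R M]
    (f : M →ₗ[R] S[X]) (hf : ∀ n, (Polynomial.X : S[X]) ^ n ∈ LinearMap.range f) :
    ¬ Module.Finite R M := by
  intro hM
  obtain ⟨s, hs⟩ := Submodule.fg_range f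
  obtain ⟨d, hd⟩ := span_le_degreeLE_of_finite (R := S) s.finite_toSet
  have hspan : LinearMap.range f ≤ (degreeLE S d).restrictScalars R :=
    hs ▸ Submodule.span_le.2 fun p hp => hd (Submodule.subset_span hp)
  have hX := hspan (hf (d + 1))
  rw [Submodule.restrictScalars_mem, mem_degreeLE, degree_X_pow, Nat.cast_le] at hX
  omega

open Matrix

theorem Matrix.single_pow_apply_same {n α : Type*} [Fintype n] [DecidableEq n] [Semiring α]
    (i : n) (a : α) (k : ℕ) : (single i i a ^ k) i i = a ^ k := by
  induction k with
  | zero => simp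
  | succ k ih => rw [pow_succ, mul_single_apply_same, ih, pow_succ]

namespace BraidCube

variable {M : Type*} [Monoid M] {s t c : M}

theorem pow_three_mul_mul_sq_mul_sq (hbraid : s * t * s = t * s * t) :
    t ^ 3 * (s * t ^ 2 * s ^ 2) = t ^ 2 * s ^ 2 * t * s ^ 3 :=
  calc t ^ 3 * (s * t ^ 2 * s ^ 2) = t ^ 2 * (t * s * t) * t * s ^ 2 := by noncomm_ring
    _ = t ^ 2 * s * (t * s * t) * s ^ 2 := by nth_rw 1 [← hbraid]; noncomm_ring
    _ = t ^ 2 * s ^ 2 * t * s ^ 3 := by rw [← hbraid]; noncomm_ring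

theorem mul_pow_three_comm (hbraid : s * t * s = t * s * t) : (s * t) ^ 3 = (t * s) ^ 3 :=
  calc (s * t) ^ 3 = s * t * s * (t * s * t) := by noncomm_ring
    _ = t * s * t * (s * t * s) := by rw [hbraid, ← hbraid]
    _ = (t * s) ^ 3 := by noncomm_ring

theorem mul_mul_sq_mul_sq (hs : s ^ 3 = c) (ht : t ^ 3 = c) :
    t * s * (s ^ 2 * t ^ 2) = c ^ 2 :=
  calc t * s * (s ^ 2 * t ^ 2) = t * s ^ 3 * t ^ 2 := by noncomm_ring
    _ = (t ^ 3) ^ 2 := by rw [hs, ← ht]; noncomm_ring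
    _ = c ^ 2 := by rw [ht]

theorem sq_mul_sq_mul_mul (hs : s ^ 3 = c) (ht : t ^ 3 = c) :
    s ^ 2 * t ^ 2 * (t * s) = c ^ 2 :=
  calc s ^ 2 * t ^ 2 * (t * s) = s ^ 2 * t ^ 3 * s := by noncomm_ring
    _ = (s ^ 3) ^ 2 := by rw [ht, ← hs]; noncomm_ring
    _ = c ^ 2 := by rw [hs]

variable (hbraid : s * t * s = t * s * t) (hs : s ^ 3 = c) (ht : t ^ 3 = c)
  (hc : ∀ z, Commute c z)
include hbraid hs ht hc

theorem mul_sq_mul_sq_pow_two : c * (s ^ 2 * t ^ 2) ^ 2 = c ^ 2 * (s * t ^ 2 * s ^ 2) := by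
  have hmid : c * (s * t ^ 2 * s ^ 2) = c * (t ^ 2 * s ^ 2 * t) := by
    rw [← ht, pow_three_mul_mul_sq_mul_sq hbraid, hs, ht, (hc _).eq]
  calc c * (s ^ 2 * t ^ 2) ^ 2 = s * (c * (s * t ^ 2 * s ^ 2)) * t ^ 2 := by
        rw [← mul_assoc s c, ← (hc s).eq]; noncomm_ring
    _ = c * (s * t ^ 2 * s ^ 2 * t ^ 3) := by
        rw [hmid, ← mul_assoc s c, ← (hc s).eq]; noncomm_ring
    _ = c ^ 2 * (s * t ^ 2 * s ^ 2) := by rw [ht, ← (hc _).eq, ← mul_assoc, ← sq]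

theorem mul_sq_mul_sq_pow_three : c * (s ^ 2 * t ^ 2) ^ 3 = c ^ 3 * (t * s) ^ 3 :=
  calc c * (s ^ 2 * t ^ 2) ^ 3 = c ^ 2 * (s * t ^ 2 * s ^ 3 * (s * t ^ 2)) := by
        rw [pow_succ, ← mul_assoc, mul_sq_mul_sq_pow_two hbraid hs ht hc]; noncomm_ring
    _ = c ^ 3 * (s * t * (t * s * t) * t) := by rw [hs, ← (hc _).eq]; noncomm_ring
    _ = c ^ 3 * (s * t) ^ 3 := by rw [← hbraid]; noncomm_ring
    _ = c ^ 3 * (t * s) ^ 3 := by rw [mul_pow_three_comm hbraid]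

theorem mul_sq_mul_sq_pow_six : c * (s ^ 2 * t ^ 2) ^ 6 = c ^ 9 := by
  have hux : Commute (t * s) (s ^ 2 * t ^ 2) :=
    (mul_mul_sq_mul_sq hs ht).trans (sq_mul_sq_mul_mul hs ht).symm
  calc c * (s ^ 2 * t ^ 2) ^ 6 = c * (s ^ 2 * t ^ 2) ^ 3 * (s ^ 2 * t ^ 2) ^ 3 := by
        rw [mul_assoc, ← pow_add]
    _ = c ^ 3 * (t * s * (s ^ 2 * t ^ 2)) ^ 3 := by
        rw [mul_sq_mul_sq_pow_three hbraid hs ht hc, mul_assoc, hux.mul_pow]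
    _ = c ^ 9 := by rw [mul_mul_sq_mul_sq hs ht, ← pow_mul, ← pow_add]

end BraidCube

namespace CycleRep

variable {K : Type*} [CommRing K]

def S (y : K) : Matrix (Fin 4) (Fin 4) K := single 0 3 y + single 3 2 1

def T : Matrix (Fin 4) (Fin 4) K := single 1 0 1 + single 2 1 1

theorem S_pow_three (y : K) : S y ^ 3 = 0 := by
  simp [S, pow_succ, add_mul, mul_add]

theorem T_pow_three : (T : Matrix (Fin 4) (Fin 4) K) ^ 3 = 0 := by
  simp [T, pow_succ, add_mul, mul_add]

theorem S_mul_T_mul_S (y : K) : S y * T * S y = 0 := by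
  simp [S, T, add_mul, mul_add]

theorem T_mul_S_mul_T (y : K) : T * S y * T = 0 := by
  simp [S, T, add_mul, mul_add]

theorem S_sq_mul_T_sq (y : K) : S y ^ 2 * T ^ 2 = single 0 0 y := by
  simp [S, T, sq, add_mul, mul_add]

end CycleRep

section Rel16aLift

variable {B : Type*} [Semiring B] [Algebra P3 B] (s t : B) (hbraid : s * t * s = t * s * t)
  (hs : s ^ 3 = algebraMap P3 B (X 0) * s ^ 2 + algebraMap P3 B (X 1) * s + algebraMap P3 B (X 2))
  (ht : t ^ 3 = algebraMap P3 B (X 0) * t ^ 2 + algebraMap P3 B (X 1) * t + algebraMap P3 B (X 2))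

def rel16aLift : RingQuot Rel16a →ₐ[P3] B :=
  RingQuot.liftAlgHom P3 ⟨FreeAlgebra.lift P3 ![s, t], fun _ _ h => by cases h <;> simpa⟩

theorem rel16aLift_mkAlgHom_ι (i : Fin 2) :
    rel16aLift s t hbraid hs ht (RingQuot.mkAlgHom P3 Rel16a (FreeAlgebra.ι P3 i)) = ![s, t] i := by
  simp [rel16aLift]

end Rel16aLift

section Rel16bLift

variable {B : Type*} [Semiring B] [Algebra ℤ[X] B] (s t : B) (hbraid : s * t * s = t * s * t)
  (hs : s ^ 3 = algebraMap ℤ[X] B Polynomial.X) (ht : t ^ 3 = algebraMap ℤ[X] B Polynomial.X)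

def rel16bLift : RingQuot Rel16b →ₐ[ℤ[X]] B :=
  RingQuot.liftAlgHom ℤ[X] ⟨FreeAlgebra.lift ℤ[X] ![s, t], fun _ _ h => by cases h <;> simpa⟩

theorem rel16bLift_mkAlgHom_ι (i : Fin 2) :
    rel16bLift s t hbraid hs ht (RingQuot.mkAlgHom ℤ[X] Rel16b (FreeAlgebra.ι ℤ[X] i)) =
      ![s, t] i := by
  simp [rel16bLift]

end Rel16bLift

open CycleRep in
theorem not_finite_rel16a : ¬ Module.Finite P3 (RingQuot Rel16a) := by
  let : Algebra P3 ℤ := (MvPolynomial.eval 0).toAlgebra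
  have hX : ∀ i, algebraMap P3 (Matrix (Fin 4) (Fin 4) ℤ[X]) (X i) = 0 := fun i => by
    rw [IsScalarTower.algebraMap_apply P3 ℤ, RingHom.algebraMap_toAlgebra, MvPolynomial.eval_X,
      Pi.zero_apply, map_zero]
  let φ := rel16aLift (S (Polynomial.X : ℤ[X])) T ((S_mul_T_mul_S _).trans (T_mul_S_mul_T _).symm)
    (by simp [hX, S_pow_three]) (by simp [hX, T_pow_three])
  refine Polynomial.not_finite_of_forall_X_pow_mem_range
    ((entryLinearMap P3 ℤ[X] 0 0) ∘ₗ φ.toLinearMap) fun n =>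
      ⟨(RingQuot.mkAlgHom P3 Rel16a (FreeAlgebra.ι P3 0) ^ 2 *
        RingQuot.mkAlgHom P3 Rel16a (FreeAlgebra.ι P3 1) ^ 2) ^ n, ?_⟩
  simp [φ, rel16aLift_mkAlgHom_ι, S_sq_mul_T_sq, single_pow_apply_same]

theorem A0s1_mul_A0s2_mul_A0s1 : A0s1 * A0s2 * A0s1 = A0s2 * A0s1 * A0s2 := by
  simpa only [map_mul, A0s1, A0s2] using RingQuot.mkAlgHom_rel ℤ[X] Rel16b.braid

theorem A0s1_pow_three : A0s1 ^ 3 = A0c := by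
  simpa only [map_pow, AlgHom.commutes, A0s1, A0c] using RingQuot.mkAlgHom_rel ℤ[X] Rel16b.cube1

theorem A0s2_pow_three : A0s2 ^ 3 = A0c := by
  simpa only [map_pow, AlgHom.commutes, A0s2, A0c] using RingQuot.mkAlgHom_rel ℤ[X] Rel16b.cube2

theorem A0c_mul_torsion_eq_zero : A0c * ((A0s1 ^ 2 * A0s2 ^ 2) ^ 6 - A0c ^ 8) = 0 := by
  rw [mul_sub A0c, ← pow_succ', sub_eq_zero]
  exact BraidCube.mul_sq_mul_sq_pow_six A0s1_mul_A0s2_mul_A0s1 A0s1_pow_three A0s2_pow_three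
    (Algebra.commutes Polynomial.X)

open CycleRep in
theorem A0_torsion_ne_zero : (A0s1 ^ 2 * A0s2 ^ 2) ^ 6 - A0c ^ 8 ≠ 0 := by
  let : Algebra ℤ[X] ℤ := (Polynomial.evalRingHom 0).toAlgebra
  have hX : algebraMap ℤ[X] (Matrix (Fin 4) (Fin 4) ℤ) Polynomial.X = 0 := by
    rw [IsScalarTower.algebraMap_apply ℤ[X] ℤ, RingHom.algebraMap_toAlgebra, coe_evalRingHom,
      Polynomial.eval_X, map_zero]
  let φ := rel16bLift (S (1 : ℤ)) T ((S_mul_T_mul_S _).trans (T_mul_S_mul_T _).symm)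
    (by rw [hX, S_pow_three]) (by rw [hX, T_pow_three])
  intro h
  have h00 := congrArg (fun m => φ m 0 0) h
  rw [map_sub φ] at h00
  simp [φ, A0s1, A0s2, A0c, hX, rel16bLift_mkAlgHom_ι, S_sq_mul_T_sq, single_pow_apply_same] at h00

/-- (1) the ℤ[a,b,c]-algebra with generators s₁, s₂ and relations
s₁s₂s₁ = s₂s₁s₂, sᵢ³ = a·sᵢ² + b·sᵢ + c is not finitely generated as a ℤ[a,b,c]-module;
(2) in the specialization a = b = 0, the element (s₁²s₂²)⁶ − c⁸ of A₀ is a nonzero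
torsion element: it is killed by c but nonzero. -/
theorem G4_generic_hecke_not_finite_and_torsion :
    (¬ Module.Finite P3 (RingQuot Rel16a))
    ∧ A0c * ((A0s1 ^ 2 * A0s2 ^ 2) ^ 6 - A0c ^ 8) = 0
    ∧ (A0s1 ^ 2 * A0s2 ^ 2) ^ 6 - A0c ^ 8 ≠ 0 :=
  ⟨not_finite_rel16a, A0c_mul_torsion_eq_zero, A0_torsion_ne_zero⟩
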